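/- Let η² > 0 and let 0 < η*² < η² be reals. Then ∫₀^∞ 4r·η²·log(r² + η*²)/(r² + η²)² dr ≤ 2·log(η*²) + 2·η²/η*². -/

import Mathlib

/-!
Write `k_b(r) = 4 r b / (r² + b)²`. Under `x = r² + b` the measure `k_b(r) dr` on `(0, ∞)`
becomes `2 b dx / x²` on `(b, ∞)`, of total mass `2`, and
`∫ log x · 2 b dx / x² = 2 (1 + log b)` (antiderivative `-2 b (1 + log x) / x`). For `a ≤ b`
we have `log (r² + a) ≤ log (r² + b)`, so the integral is at most `2 (1 + log b)`,
and `log (b / a) ≤ b / a - 1` gives the bound.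
Integrating `(log (r² + b) - log b) · k_b` rather than `log (r² + b) · k_b` keeps the integrand
nonnegative, so its integrability follows from the antiderivative having a limit at `∞`.
-/

open MeasureTheory Real Filter Topology Set

section
variable {a b : ℝ}

lemma hasDerivAt_sq_add (b r : ℝ) : HasDerivAt (fun r : ℝ => r ^ 2 + b) (2 * r) r := by
  simpa using (hasDerivAt_pow 2 r).add_const b

lemma tendsto_sq_add_atTop (b : ℝ) : Tendsto (fun r : ℝ => r ^ 2 + b) atTop atTop :=
  tendsto_atTop_add_const_right _ _ (tendsto_pow_atTop two_ne_zero)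

lemma hasDerivAt_neg_div_sq_add (hb : 0 < b) (r : ℝ) :
    HasDerivAt (fun r : ℝ => -2 * b / (r ^ 2 + b)) (4 * r * b / (r ^ 2 + b) ^ 2) r := by
  have hne : r ^ 2 + b ≠ 0 := by positivity
  refine ((hasDerivAt_const r (-2 * b)).div (hasDerivAt_sq_add b r) hne).congr_deriv ?_
  field_simp
  ring

lemma hasDerivAt_log_sub_log_div_sq_add (hb : 0 < b) (r : ℝ) :
    HasDerivAt (fun r : ℝ => -2 * b * (1 + log (r ^ 2 + b) - log b) / (r ^ 2 + b))
      (4 * r * b * (log (r ^ 2 + b) - log b) / (r ^ 2 + b) ^ 2) r := by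
  have hne : r ^ 2 + b ≠ 0 := by positivity
  have hlog := (hasDerivAt_sq_add b r).log hne
  refine ((((hlog.const_add 1).sub_const (log b)).const_mul (-2 * b)).div
    (hasDerivAt_sq_add b r) hne).congr_deriv ?_
  field_simp
  ring

lemma tendsto_neg_div_sq_add_atTop (b : ℝ) :
    Tendsto (fun r : ℝ => -2 * b / (r ^ 2 + b)) atTop (𝓝 0) :=
  tendsto_const_nhds.div_atTop (tendsto_sq_add_atTop b)

lemma tendsto_log_sub_log_div_sq_add_atTop (b : ℝ) :
    Tendsto (fun r : ℝ => -2 * b * (1 + log (r ^ 2 + b) - log b) / (r ^ 2 + b)) atTop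
      (𝓝 0) := by
  have hlog : Tendsto (fun x : ℝ => log x / x) atTop (𝓝 0) :=
    isLittleO_log_id_atTop.tendsto_div_nhds_zero
  have hconst : Tendsto (fun x : ℝ => (1 - log b) / x) atTop (𝓝 0) :=
    tendsto_const_nhds.div_atTop tendsto_id
  have := ((hconst.add hlog).const_mul (-2 * b)).comp (tendsto_sq_add_atTop b)
  simp only [add_zero, mul_zero] at this
  refine this.congr fun r => ?_
  simp only [Function.comp_apply]
  ring

lemma integrableOn_Ioi_and_integral_kernel (hb : 0 < b) :
    IntegrableOn (fun r : ℝ => 4 * r * b / (r ^ 2 + b) ^ 2) (Ioi 0) ∧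
      ∫ r in Ioi (0 : ℝ), 4 * r * b / (r ^ 2 + b) ^ 2 = 2 := by
  have hderiv := fun r (_ : r ∈ Ici (0 : ℝ)) => hasDerivAt_neg_div_sq_add hb r
  have hnonneg : ∀ r ∈ Ioi (0 : ℝ), 0 ≤ 4 * r * b / (r ^ 2 + b) ^ 2 := fun r hr => by
    have : (0 : ℝ) < r := hr
    positivity
  refine ⟨integrableOn_Ioi_deriv_of_nonneg' hderiv hnonneg (tendsto_neg_div_sq_add_atTop b), ?_⟩
  rw [integral_Ioi_of_hasDerivAt_of_nonneg' hderiv hnonneg (tendsto_neg_div_sq_add_atTop b)]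
  field_simp
  ring

lemma integrableOn_Ioi_and_integral_log_sub_log_mul_kernel (hb : 0 < b) :
    IntegrableOn (fun r : ℝ => 4 * r * b * (log (r ^ 2 + b) - log b) / (r ^ 2 + b) ^ 2)
      (Ioi 0) ∧
      ∫ r in Ioi (0 : ℝ), 4 * r * b * (log (r ^ 2 + b) - log b) / (r ^ 2 + b) ^ 2 = 2 := by
  have hderiv := fun r (_ : r ∈ Ici (0 : ℝ)) => hasDerivAt_log_sub_log_div_sq_add hb r
  have hnonneg : ∀ r ∈ Ioi (0 : ℝ),
      0 ≤ 4 * r * b * (log (r ^ 2 + b) - log b) / (r ^ 2 + b) ^ 2 := fun r hr => by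
    have : (0 : ℝ) < r := hr
    have : 0 ≤ log (r ^ 2 + b) - log b :=
      sub_nonneg.mpr (log_le_log hb (le_add_of_nonneg_left (sq_nonneg r)))
    positivity
  have hlim := tendsto_log_sub_log_div_sq_add_atTop b
  refine ⟨integrableOn_Ioi_deriv_of_nonneg' hderiv hnonneg hlim, ?_⟩
  rw [integral_Ioi_of_hasDerivAt_of_nonneg' hderiv hnonneg hlim]
  norm_num
  field_simp

lemma integrableOn_Ioi_and_integral_log_mul_kernel (hb : 0 < b) :
    IntegrableOn (fun r : ℝ => 4 * r * b * log (r ^ 2 + b) / (r ^ 2 + b) ^ 2) (Ioi 0) ∧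
      ∫ r in Ioi (0 : ℝ), 4 * r * b * log (r ^ 2 + b) / (r ^ 2 + b) ^ 2 = 2 * (1 + log b) := by
  obtain ⟨hint₁, hval₁⟩ := integrableOn_Ioi_and_integral_log_sub_log_mul_kernel hb
  obtain ⟨hint₂, hval₂⟩ := integrableOn_Ioi_and_integral_kernel hb
  have hsplit : (fun r : ℝ => 4 * r * b * log (r ^ 2 + b) / (r ^ 2 + b) ^ 2) = fun r =>
      4 * r * b * (log (r ^ 2 + b) - log b) / (r ^ 2 + b) ^ 2 +
        log b * (4 * r * b / (r ^ 2 + b) ^ 2) := by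
    ext r
    ring
  rw [hsplit]
  refine ⟨hint₁.add (hint₂.const_mul _), ?_⟩
  rw [integral_add hint₁ (hint₂.const_mul _), integral_const_mul, hval₁, hval₂]
  ring

lemma integral_Ioi_log_mul_kernel_le (ha : 0 < a) (hab : a ≤ b) :
    ∫ r in Ioi (0 : ℝ), 4 * r * b * log (r ^ 2 + a) / (r ^ 2 + b) ^ 2 ≤ 2 * (1 + log b) := by
  have hb := ha.trans_le hab
  obtain ⟨hint_upper, hval_upper⟩ := integrableOn_Ioi_and_integral_log_mul_kernel hb
  have hint_lower := (integrableOn_Ioi_and_integral_kernel hb).1.const_mul (log a)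
  have hle_upper : ∀ r ∈ Ioi (0 : ℝ), 4 * r * b * log (r ^ 2 + a) / (r ^ 2 + b) ^ 2 ≤
      4 * r * b * log (r ^ 2 + b) / (r ^ 2 + b) ^ 2 := fun r hr => by
    have : (0 : ℝ) < r := hr
    gcongr
  have hle_lower : ∀ r ∈ Ioi (0 : ℝ), log a * (4 * r * b / (r ^ 2 + b) ^ 2) ≤
      4 * r * b * log (r ^ 2 + a) / (r ^ 2 + b) ^ 2 := fun r hr => by
    have : (0 : ℝ) < r := hr
    rw [mul_div_assoc', mul_comm]
    gcongr
    exact le_add_of_nonneg_left (sq_nonneg r)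
  have hint : IntegrableOn (fun r : ℝ => 4 * r * b * log (r ^ 2 + a) / (r ^ 2 + b) ^ 2) (Ioi 0) :=
    integrable_of_le_of_le (by fun_prop : Measurable _).aestronglyMeasurable
      ((ae_restrict_iff' measurableSet_Ioi).mpr (Eventually.of_forall hle_lower))
      ((ae_restrict_iff' measurableSet_Ioi).mpr (Eventually.of_forall hle_upper))
      hint_lower hint_upper
  exact hval_upper ▸ setIntegral_mono_on hint hint_upper measurableSet_Ioi hle_upper

lemma one_add_log_le_log_add_div (ha : 0 < a) (hb : 0 < b) : 1 + log b ≤ log a + b / a := by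
  have := log_le_sub_one_of_pos (div_pos hb ha)
  rw [log_div hb.ne' ha.ne'] at this
  linarith

end

theorem stmt_7 (η2 ηs2 : ℝ) (hηs2 : 0 < ηs2) (h : ηs2 < η2) :
    ∫ r in Set.Ioi (0 : ℝ), 4 * r * η2 * Real.log (r ^ 2 + ηs2) / (r ^ 2 + η2) ^ 2
      ≤ 2 * Real.log ηs2 + 2 * η2 / ηs2 :=
  calc _ ≤ 2 * (1 + log η2) := integral_Ioi_log_mul_kernel_le hηs2 h.le
    _ ≤ 2 * log ηs2 + 2 * η2 / ηs2 := by
      linarith [one_add_log_le_log_add_div hηs2 (hηs2.trans h), mul_div_assoc 2 η2 ηs2]
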